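/- Fix an integer k ≥ 1 and assume sin(jθ) ≠ 0 for all integers 1 ≤ j ≤ 2k. Then the ball-wall action invariant holds: X_{2k}·v_{2k} = −x_0·V_0 (a positive constant, independent of k), i.e. the product of the heavy ball's position and the light ball's velocity at every ball-wall collision of the Galperin billiard equals |x_0|·V_0. -/

import Mathlib

/-!
In the coordinates `(V, t v)` with `t = √(m / M)` the kinetic energy is a multiple of
`V² + (t v)²`: an elastic ball-ball collision is the reflection in the line at angle `θ`, a wall
collision the reflection in the horizontal axis, so every pair of collisions rotates the velocity
by `2θ`. Consequently the divisors `v_{2l+1}` and `v_{2l} - V_{2l}` of the position recursion are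
multiples of `V_0 sin ((2l+2)θ)` and `V_0 sin ((2l+1)θ)`, hence nonzero. Once they are, the
invariant is pure algebra: an elastic collision reverses the relative velocity, which makes
`X (v - V) = x_0 V_0` after each ball-ball collision and `X v = -x_0 V_0` after each wall collision.
-/

open Real

namespace Real

theorem cos_two_mul_arctan (t : ℝ) : cos (2 * arctan t) = (1 - t ^ 2) / (1 + t ^ 2) := by
  rw [cos_two_mul, cos_sq_arctan]
  field_simp
  ring

theorem sin_two_mul_arctan (t : ℝ) : sin (2 * arctan t) = 2 * t / (1 + t ^ 2) := by
  rw [sin_two_mul, ← tan_mul_cos (cos_arctan_pos t).ne', tan_arctan, mul_assoc, mul_assoc,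
    ← sq, cos_sq_arctan]
  field_simp

end Real

namespace Galperin

structure VelocityOrbit (M m : ℝ) (V v : ℕ → ℝ) : Prop where
  light_ball_at_rest : v 0 = 0
  ball_ball : ∀ l : ℕ,
    V (2 * l + 1) = ((M - m) * V (2 * l) + 2 * m * v (2 * l)) / (M + m) ∧
    v (2 * l + 1) = (2 * M * V (2 * l) + (m - M) * v (2 * l)) / (M + m)
  ball_wall : ∀ l : ℕ, V (2 * l + 2) = V (2 * l + 1) ∧ v (2 * l + 2) = -v (2 * l + 1)

theorem elastic_collision_eq_reflection {M m t : ℝ} (hM : M ≠ 0) (ht : t ^ 2 * M = m)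
    (V v : ℝ) :
    ((M - m) * V + 2 * m * v) / (M + m) =
        cos (2 * arctan t) * V + sin (2 * arctan t) * (t * v) ∧
      t * ((2 * M * V + (m - M) * v) / (M + m)) =
        sin (2 * arctan t) * V - cos (2 * arctan t) * (t * v) := by
  have hMm : M + m ≠ 0 := by
    rw [← ht, ← one_add_mul, add_comm]
    exact mul_ne_zero (by positivity) hM
  rw [cos_two_mul_arctan, sin_two_mul_arctan]
  constructor <;> field_simp <;> rw [← ht] <;> ring

theorem elastic_collision_relative_velocity {M m : ℝ} (hMm : M + m ≠ 0) (V v : ℝ) :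
    (2 * M * V + (m - M) * v) / (M + m) - ((M - m) * V + 2 * m * v) / (M + m) = V - v := by
  field_simp
  ring

theorem ball_collision_position {X x V v X' : ℝ} (hX' : X' = X + (X - x) * V / (v - V))
    (hvV : v - V ≠ 0) : X' * (V - v) = x * V - X * v := by
  rw [hX']
  field_simp
  ring

theorem wall_collision_position {X V v X' : ℝ} (hX' : X' = X - V / v * X) (hv : v ≠ 0) :
    X' * v = X * (v - V) := by
  rw [hX']
  field_simp

namespace VelocityOrbit

variable {M m t θ : ℝ} {V v : ℕ → ℝ}

theorem ball_ball_polar (h : VelocityOrbit M m V v) (hM : M ≠ 0) (ht : t ^ 2 * M = m)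
    (hθ : θ = arctan t) {l : ℕ} {R α : ℝ} (hV : V (2 * l) = R * cos α)
    (hv : t * v (2 * l) = -(R * sin α)) :
    V (2 * l + 1) = R * cos (α + 2 * θ) ∧ t * v (2 * l + 1) = R * sin (α + 2 * θ) := by
  obtain ⟨hV', hv'⟩ := h.ball_ball l
  obtain ⟨hVref, hvref⟩ := elastic_collision_eq_reflection hM ht (V (2 * l)) (v (2 * l))
  rw [← hV', hV, hv, ← hθ] at hVref
  rw [← hv', hV, hv, ← hθ] at hvref
  rw [cos_add, sin_add, hVref, hvref]
  constructor <;> ring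

theorem even_closed_form (h : VelocityOrbit M m V v) (hM : M ≠ 0) (ht : t ^ 2 * M = m)
    (hθ : θ = arctan t) (l : ℕ) :
    V (2 * l) = V 0 * cos (2 * l * θ) ∧ t * v (2 * l) = -(V 0 * sin (2 * l * θ)) := by
  induction l with
  | zero => simp [h.light_ball_at_rest]
  | succ l ih =>
    obtain ⟨hV, hv⟩ := h.ball_ball_polar hM ht hθ ih.1 ih.2
    obtain ⟨hVw, hvw⟩ := h.ball_wall l
    have hangle : 2 * ((l + 1 : ℕ) : ℝ) * θ = 2 * l * θ + 2 * θ := by push_cast; ring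
    rw [hangle, Nat.mul_succ, hVw, hvw, hV, mul_neg, hv]
    exact ⟨rfl, rfl⟩

theorem light_velocity_odd_eq_sin (h : VelocityOrbit M m V v) (hM : M ≠ 0) (ht : t ^ 2 * M = m)
    (hθ : θ = arctan t) (l : ℕ) :
    t * v (2 * l + 1) = V 0 * sin ((2 * l + 2) * θ) := by
  obtain ⟨hV, hv⟩ := h.even_closed_form hM ht hθ l
  rw [(h.ball_ball_polar hM ht hθ hV hv).2]
  ring_nf

theorem relative_velocity_even_eq_sin (h : VelocityOrbit M m V v) (hM : M ≠ 0)
    (ht : t ^ 2 * M = m) (hθ : θ = arctan t) (l : ℕ) :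
    (V (2 * l) - v (2 * l)) * sin θ = V 0 * sin ((2 * l + 1) * θ) := by
  obtain ⟨hV, hv⟩ := h.even_closed_form hM ht hθ l
  have hsin : sin θ = t * cos θ := by
    rw [hθ, ← tan_mul_cos (cos_arctan_pos t).ne', tan_arctan]
  rw [show (2 * (l : ℝ) + 1) * θ = 2 * l * θ + θ by ring, sin_add, hsin]
  linear_combination t * cos θ * hV - cos θ * hv

theorem wall_action_eq_of_ne_zero (h : VelocityOrbit M m V v) (hMm : M + m ≠ 0) {k : ℕ}
    (hk : 1 ≤ k) {X x : ℕ → ℝ}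
    (hBBpos : ∀ l : ℕ, 2 * l + 1 ≤ 2 * k →
      X (2 * l + 1)
        = X (2 * l) + (X (2 * l) - x (2 * l)) * V (2 * l) / (v (2 * l) - V (2 * l)) ∧
      x (2 * l + 1) = X (2 * l + 1))
    (hBWpos : ∀ l : ℕ, 1 ≤ l → 2 * l ≤ 2 * k →
      X (2 * l) = X (2 * l - 1) - (V (2 * l - 1) / v (2 * l - 1)) * x (2 * l - 1) ∧
      x (2 * l) = 0)
    (hball : ∀ l < k, v (2 * l) - V (2 * l) ≠ 0) (hwall : ∀ l < k, v (2 * l + 1) ≠ 0) :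
    X (2 * k) * v (2 * k) = -x 0 * V 0 := by
  have hrel (l : ℕ) : v (2 * l + 1) - V (2 * l + 1) = V (2 * l) - v (2 * l) := by
    rw [(h.ball_ball l).1, (h.ball_ball l).2]
    exact elastic_collision_relative_velocity hMm _ _
  have hwall_step (l : ℕ) (hl : l < k)
      (hodd : X (2 * l + 1) * (v (2 * l + 1) - V (2 * l + 1)) = x 0 * V 0) :
      X (2 * (l + 1)) * v (2 * (l + 1)) = -x 0 * V 0 := by
    obtain ⟨hX, -⟩ := hBWpos (l + 1) (by omega) (by omega)
    rw [show 2 * (l + 1) - 1 = 2 * l + 1 by omega, (hBBpos l (by omega)).2] at hX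
    rw [mul_add_one] at hX ⊢
    rw [(h.ball_wall l).2, mul_neg, wall_collision_position hX (hwall l hl), hodd, neg_mul]
  have hodd (l : ℕ) (hl : l < k) :
      X (2 * l + 1) * (v (2 * l + 1) - V (2 * l + 1)) = x 0 * V 0 := by
    induction l with
    | zero =>
      rw [hrel, ball_collision_position (hBBpos 0 (by omega)).1 (hball 0 hl),
        mul_zero, h.light_ball_at_rest, mul_zero, sub_zero]
    | succ l ih =>
      rw [hrel, ball_collision_position (hBBpos (l + 1) (by omega)).1 (hball (l + 1) hl),
        (hBWpos (l + 1) (by omega) (by omega)).2, hwall_step l (by omega) (ih (by omega))]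
      ring
  obtain ⟨j, rfl⟩ : ∃ j, k = j + 1 := ⟨k - 1, by omega⟩
  exact hwall_step j (by omega) (hodd j (by omega))

end VelocityOrbit

end Galperin

open Galperin in
theorem galperin_ball_wall_action_invariant_general
    (M m : ℝ) (hM : 0 < M) (hm : 0 < m)
    (θ : ℝ) (hθ : θ = Real.arctan (Real.sqrt (m / M)))
    (k : ℕ) (hk : 1 ≤ k)
    (hsin : ∀ j : ℕ, 1 ≤ j → j ≤ 2 * k → Real.sin ((j : ℝ) * θ) ≠ 0)
    (V v X x : ℕ → ℝ)
    (hV0 : 0 < V 0) (hv0 : v 0 = 0)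
    (hBBvel : ∀ l : ℕ,
      V (2 * l + 1) = ((M - m) * V (2 * l) + 2 * m * v (2 * l)) / (M + m) ∧
      v (2 * l + 1) = (2 * M * V (2 * l) + (m - M) * v (2 * l)) / (M + m))
    (hBWvel : ∀ l : ℕ, 1 ≤ l →
      V (2 * l) = V (2 * l - 1) ∧ v (2 * l) = -v (2 * l - 1))
    (hBBpos : ∀ l : ℕ, 2 * l + 1 ≤ 2 * k →
      X (2 * l + 1)
        = X (2 * l) + (X (2 * l) - x (2 * l)) * V (2 * l) / (v (2 * l) - V (2 * l)) ∧
      x (2 * l + 1) = X (2 * l + 1))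
    (hBWpos : ∀ l : ℕ, 1 ≤ l → 2 * l ≤ 2 * k →
      X (2 * l) = X (2 * l - 1) - (V (2 * l - 1) / v (2 * l - 1)) * x (2 * l - 1) ∧
      x (2 * l) = 0) :
    X (2 * k) * v (2 * k) = -x 0 * V 0 := by
  have ht : √(m / M) ^ 2 * M = m := by
    rw [sq_sqrt (by positivity)]
    field_simp
  have horbit : VelocityOrbit M m V v := ⟨hv0, hBBvel, fun l => by
    simpa only [mul_add_one, show 2 * l + 2 - 1 = 2 * l + 1 by omega] using
      hBWvel (l + 1) (by omega)⟩
  have hsin' (j : ℕ) (h1 : 1 ≤ j) (h2 : j ≤ 2 * k) : V 0 * sin (j * θ) ≠ 0 :=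
    mul_ne_zero hV0.ne' (hsin j h1 h2)
  refine horbit.wall_action_eq_of_ne_zero (by positivity) hk hBBpos hBWpos
    (fun l hl hzero => ?_) (fun l hl hzero => ?_)
  · have hrel := horbit.relative_velocity_even_eq_sin hM.ne' ht hθ l
    rw [sub_eq_zero.mp hzero, sub_self, zero_mul] at hrel
    exact hsin' (2 * l + 1) (by omega) (by omega) (by push_cast; exact hrel.symm)
  · have hodd := horbit.light_velocity_odd_eq_sin hM.ne' ht hθ l
    rw [hzero, mul_zero] at hodd
    exact hsin' (2 * l + 2) (by omega) (by omega) (by push_cast; exact hodd.symm)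

/-- Ball-wall action invariant of the Galperin billiard: at every ball-wall
collision, `X_{2k} · v_{2k} = −x_0 · V_0`, a positive constant independent of
`k`. -/
theorem galperin_ball_wall_action_invariant
    (M m : ℝ) (hM : 0 < M) (hm : 0 < m)
    (θ : ℝ) (hθ : θ = Real.arctan (Real.sqrt (m / M)))
    (k : ℕ) (hk : 1 ≤ k)
    (hsin : ∀ j : ℕ, 1 ≤ j → j ≤ 2 * k → Real.sin ((j : ℝ) * θ) ≠ 0)
    (V v X x : ℕ → ℝ)
    (hV0 : 0 < V 0) (hv0 : v 0 = 0) (hX0x0 : X 0 < x 0) (hx0 : x 0 < 0)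
    (hBBvel : ∀ l : ℕ,
      V (2 * l + 1) = ((M - m) * V (2 * l) + 2 * m * v (2 * l)) / (M + m) ∧
      v (2 * l + 1) = (2 * M * V (2 * l) + (m - M) * v (2 * l)) / (M + m))
    (hBWvel : ∀ l : ℕ, 1 ≤ l →
      V (2 * l) = V (2 * l - 1) ∧ v (2 * l) = -v (2 * l - 1))
    (hBBpos : ∀ l : ℕ, 2 * l + 1 ≤ 2 * k →
      X (2 * l + 1)
        = X (2 * l) + (X (2 * l) - x (2 * l)) * V (2 * l) / (v (2 * l) - V (2 * l)) ∧
      x (2 * l + 1) = X (2 * l + 1))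
    (hBWpos : ∀ l : ℕ, 1 ≤ l → 2 * l ≤ 2 * k →
      X (2 * l) = X (2 * l - 1) - (V (2 * l - 1) / v (2 * l - 1)) * x (2 * l - 1) ∧
      x (2 * l) = 0) :
    X (2 * k) * v (2 * k) = -x 0 * V 0 :=
  galperin_ball_wall_action_invariant_general M m hM hm θ hθ k hk hsin V v X x hV0 hv0 hBBvel hBWvel
    hBBpos hBWpos
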